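/- For all reals r ≥ 0 and t ≥ 0, with p = (4+r)/(16+5r), one has p² < f(t) ≤ p where f(t) = c₀e^{−4t} + c₊e^{−u₊t} + c₋e^{−u₋t} + p² with the JC+CpG coefficients (r > 0). Moreover f(t) → p² as t → +∞. -/
import Mathlib


open Real Filter Set

/-- u = √(4+2r+r²). -/
noncomputable def uu (r : ℝ) : ℝ := Real.sqrt (4 + 2*r + r^2)

/-- Stationary frequency of C: p = (4+r)/(16+5r). -/
noncomputable def pC (r : ℝ) : ℝ := (4 + r) / (16 + 5*r)

/-- c₀ = (3+r)/(2(16+5r)). -/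
noncomputable def c0 (r : ℝ) : ℝ := (3 + r) / (2 * (16 + 5*r))

/-- c₊ = (3+r)(u(16+3r) − (32+14r+3r²))/(4u(16+5r)²). -/
noncomputable def cp (r : ℝ) : ℝ :=
  (3 + r) * (uu r * (16 + 3*r) - (32 + 14*r + 3*r^2)) / (4 * uu r * (16 + 5*r)^2)

/-- c₋ = (3+r)(u(16+3r) + (32+14r+3r²))/(4u(16+5r)²). -/
noncomputable def cm (r : ℝ) : ℝ :=
  (3 + r) * (uu r * (16 + 3*r) + (32 + 14*r + 3*r^2)) / (4 * uu r * (16 + 5*r)^2)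

/-- (C,C)(t) in the stationary JC+CpG model:
f(t) = c₀e^{−4t} + c₊e^{−u₊t} + c₋e^{−u₋t} + p². -/
noncomputable def fCC (r t : ℝ) : ℝ :=
  c0 r * Real.exp (-4 * t) + cp r * Real.exp (-(6 + r + uu r) * t)
    + cm r * Real.exp (-(6 + r - uu r) * t) + (pC r)^2

lemma uu_sq (r : ℝ) (hr : 0 < r) : (uu r)^2 = 4 + 2*r + r^2 :=
  Real.sq_sqrt (by nlinarith)

lemma uu_pos (r : ℝ) (hr : 0 < r) : 0 < uu r :=
  Real.sqrt_pos.mpr (by nlinarith)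

lemma key (r : ℝ) (hr : 0 < r) : 32 + 14*r + 3*r^2 < uu r * (16 + 3*r) := by
  have hu2 := uu_sq r hr
  have hu := uu_pos r hr
  nlinarith [mul_pos hu (by nlinarith : (0:ℝ) < 16 + 3*r), sq_nonneg r, mul_pos hr hr]

lemma uu_lt (r : ℝ) (hr : 0 < r) : uu r < 6 + r := by
  have hu2 := uu_sq r hr
  have hu := uu_pos r hr
  nlinarith

lemma c0_pos (r : ℝ) (hr : 0 < r) : 0 < c0 r := by
  unfold c0; positivity

lemma cp_pos (r : ℝ) (hr : 0 < r) : 0 < cp r := by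
  unfold cp
  have hu := uu_pos r hr
  have hk := key r hr
  have h1 : 0 < (3 + r) * (uu r * (16 + 3*r) - (32 + 14*r + 3*r^2)) := by nlinarith
  have h2 : 0 < 4 * uu r * (16 + 5*r)^2 := by positivity
  exact div_pos h1 h2

lemma cm_pos (r : ℝ) (hr : 0 < r) : 0 < cm r := by
  unfold cm
  have hu := uu_pos r hr
  have h1 : 0 < (3 + r) * (uu r * (16 + 3*r) + (32 + 14*r + 3*r^2)) := by nlinarith
  have h2 : 0 < 4 * uu r * (16 + 5*r)^2 := by positivity
  exact div_pos h1 h2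

lemma csum (r : ℝ) (hr : 0 < r) : c0 r + cp r + cm r = pC r - (pC r)^2 := by
  have hu := uu_pos r hr
  have hu2 := uu_sq r hr
  have h16 : (16 + 5*r) ≠ 0 := by nlinarith
  unfold c0 cp cm pC
  field_simp
  ring_nf

/-- For r > 0 and t ≥ 0 one has p² < f(t) ≤ p, and f(t) → p² as t → +∞. -/
theorem stmt17 (r : ℝ) (hr : 0 < r) :
    (∀ t : ℝ, 0 ≤ t → (pC r)^2 < fCC r t ∧ fCC r t ≤ pC r) ∧
    Tendsto (fCC r) atTop (nhds ((pC r)^2)) := by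
  have hu := uu_pos r hr
  have hul := uu_lt r hr
  have hc0 := c0_pos r hr
  have hcp := cp_pos r hr
  have hcm := cm_pos r hr
  have hsum := csum r hr
  constructor
  · intro t ht
    constructor
    · have := Real.exp_pos (-4 * t)
      have := Real.exp_pos (-(6 + r + uu r) * t)
      have := Real.exp_pos (-(6 + r - uu r) * t)
      unfold fCC
      nlinarith
    · have e1 : Real.exp (-4 * t) ≤ 1 := Real.exp_le_one_iff.mpr (by nlinarith)
      have e2 : Real.exp (-(6 + r + uu r) * t) ≤ 1 := Real.exp_le_one_iff.mpr (by nlinarith)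
      have e3 : Real.exp (-(6 + r - uu r) * t) ≤ 1 := Real.exp_le_one_iff.mpr (by nlinarith)
      have p1 := Real.exp_pos (-4 * t)
      have p2 := Real.exp_pos (-(6 + r + uu r) * t)
      have p3 := Real.exp_pos (-(6 + r - uu r) * t)
      unfold fCC
      nlinarith
  · have h1 : Tendsto (fun t => Real.exp (-4 * t)) atTop (nhds 0) := by
      apply Real.tendsto_exp_atBot.comp
      exact (tendsto_const_mul_atBot_of_neg (by norm_num)).mpr tendsto_id
    have h2 : Tendsto (fun t => Real.exp (-(6 + r + uu r) * t)) atTop (nhds 0) := by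
      apply Real.tendsto_exp_atBot.comp
      exact (tendsto_const_mul_atBot_of_neg (by nlinarith)).mpr tendsto_id
    have h3 : Tendsto (fun t => Real.exp (-(6 + r - uu r) * t)) atTop (nhds 0) := by
      apply Real.tendsto_exp_atBot.comp
      exact (tendsto_const_mul_atBot_of_neg (by nlinarith)).mpr tendsto_id
    have : Tendsto (fCC r) atTop
        (nhds (c0 r * 0 + cp r * 0 + cm r * 0 + (pC r)^2)) := by
      unfold fCC
      exact (((h1.const_mul _).add (h2.const_mul _)).add (h3.const_mul _)).add tendsto_const_nhds
    simpa using this
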